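/- With A the upper unitriangular matrix with entries G_{i,j} above the diagonal and B the matrix of the previous statement, the conjugation B·A·Bᵀ equals the upper unitriangular matrix whose (i,j)-entry for i < j is: G_{i+1,j+1} if j < n, and G_{1,i+1} if j = n. In particular, applying the transformation A ↦ B A Bᵀ n times returns the original matrix A. -/

import Mathlib

open Matrix

/-- Upper unitriangular matrix with entries `G j k` above the diagonal. -/
def Amat {R : Type*} [CommRing R] {n : ℕ} (G : Fin n → Fin n → R) :
    Matrix (Fin n) (Fin n) R :=
  fun j k => if j = k then 1 else if (j : ℕ) < k then G j k else 0

/-- The matrix `B` of equation (B...B): first column `(G_{1,2},…,G_{1,n},1)ᵀ`,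
superdiagonal `-1`, zeros elsewhere (0-indexed, size `m+2`). -/
def Bprod {R : Type*} [CommRing R] {m : ℕ} (G : Fin (m + 2) → Fin (m + 2) → R) :
    Matrix (Fin (m + 2)) (Fin (m + 2)) R :=
  fun j l =>
    if (l : ℕ) = 0 then
      (if hj : (j : ℕ) < m + 1 then G 0 ⟨(j : ℕ) + 1, by omega⟩ else 1)
    else if (l : ℕ) = (j : ℕ) + 1 then -1
    else 0

/-- The cyclic shift of the variables `G`: the entry `(j,k)` of the new array
is `G (j+1) (k+1)` if `k < n-1` and `G 0 (j+1)` if `k = n-1`. -/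
def Gshift {R : Type*} [CommRing R] {m : ℕ} (G : Fin (m + 2) → Fin (m + 2) → R) :
    Fin (m + 2) → Fin (m + 2) → R :=
  fun j k =>
    if hj : (j : ℕ) < m + 1 then
      (if hk : (k : ℕ) < m + 1 then G ⟨(j : ℕ) + 1, by omega⟩ ⟨(k : ℕ) + 1, by omega⟩
       else G 0 ⟨(j : ℕ) + 1, by omega⟩)
    else G j k

/-! Left multiplication by `B` replaces row `j < n - 1` by `G 0 (j + 1)` times row `0` minus
row `j + 1`, and the last row by row `0`; right multiplication by `Bᵀ` does the same to columns.
Row `0` of `A` is `(1, G 0 1, …, G 0 (n - 1))` and column `0` is `e₀`, so the `G 0 _` terms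
cancel and `B A Bᵀ` is `A` with indices shifted by one, the last column being filled by row `0`.

For the periodicity, read `G` as a symmetric array through its entries above the diagonal:
off the diagonal, `Gshift` is then the rotation `j ↦ j + 1` of both indices in `ℤ/n`, whose
`n`-th power is the identity. -/

section Amat

variable {R : Type*} [CommRing R] {n : ℕ} (G : Fin n → Fin n → R)

theorem Amat_apply_self (j : Fin n) : Amat G j j = 1 := if_pos rfl

theorem Amat_apply_of_lt {j k : Fin n} (h : j < k) : Amat G j k = G j k := by
  rw [Amat, if_neg h.ne, if_pos (Fin.lt_def.1 h)]

theorem Amat_apply_eq_zero_of_lt {j k : Fin n} (h : k < j) : Amat G j k = 0 := by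
  rw [Amat, if_neg h.ne', if_neg (not_lt.2 (Fin.le_def.1 h.le))]

end Amat

section Bprod

variable {R : Type*} [CommRing R] {m : ℕ} (G : Fin (m + 2) → Fin (m + 2) → R)
  (M : Matrix (Fin (m + 2)) (Fin (m + 2)) R)

theorem Bprod_mul_apply_castSucc (i : Fin (m + 1)) (p : Fin (m + 2)) :
    (Bprod G * M) i.castSucc p = G 0 i.succ * M 0 p - M i.succ p := by
  rw [Matrix.mul_apply, Fin.sum_univ_succ, sub_eq_add_neg]
  simp [Bprod, Fin.succ, Fin.val_inj, Fin.is_le]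

theorem Bprod_mul_apply_last (p : Fin (m + 2)) :
    (Bprod G * M) (Fin.last _) p = M 0 p := by
  rw [Matrix.mul_apply, Fin.sum_univ_succ]
  simp [Bprod, Fin.succ, Fin.is_le, Nat.ne_of_lt]

theorem mul_Bprod_transpose_apply_castSucc (p : Fin (m + 2)) (i : Fin (m + 1)) :
    (M * (Bprod G)ᵀ) p i.castSucc = G 0 i.succ * M p 0 - M p i.succ := by
  rw [← transpose_apply (M * _), transpose_mul, transpose_transpose, Bprod_mul_apply_castSucc]
  rfl

theorem mul_Bprod_transpose_apply_last (p : Fin (m + 2)) :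
    (M * (Bprod G)ᵀ) p (Fin.last _) = M p 0 := by
  rw [← transpose_apply (M * _), transpose_mul, transpose_transpose, Bprod_mul_apply_last]
  rfl

end Bprod

def symmOfUpper {α R : Type*} [LinearOrder α] (G : α → α → R) (j k : α) : R :=
  G (min j k) (max j k)

section symmOfUpper

variable {α R : Type*} [LinearOrder α] (G : α → α → R)

theorem symmOfUpper_comm (j k : α) : symmOfUpper G j k = symmOfUpper G k j := by
  rw [symmOfUpper, symmOfUpper, min_comm, max_comm]

theorem symmOfUpper_of_le {j k : α} (h : j ≤ k) : symmOfUpper G j k = G j k := by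
  rw [symmOfUpper, min_eq_left h, max_eq_right h]

end symmOfUpper

section Gshift

variable {R : Type*} [CommRing R] {m : ℕ} (G : Fin (m + 2) → Fin (m + 2) → R)

theorem Gshift_castSucc_castSucc (i k : Fin (m + 1)) :
    Gshift G i.castSucc k.castSucc = G i.succ k.succ := by
  simp [Gshift, Fin.succ, Fin.is_le]

theorem Gshift_castSucc_last (i : Fin (m + 1)) :
    Gshift G i.castSucc (Fin.last _) = G 0 i.succ := by
  simp [Gshift, Fin.succ, Fin.is_le]

theorem Amat_Gshift_castSucc_castSucc (i k : Fin (m + 1)) :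
    Amat (Gshift G) i.castSucc k.castSucc = Amat G i.succ k.succ := by
  rcases lt_trichotomy i k with h | rfl | h
  · rw [Amat_apply_of_lt _ (Fin.castSucc_lt_castSucc_iff.2 h),
      Amat_apply_of_lt _ (Fin.succ_lt_succ_iff.2 h), Gshift_castSucc_castSucc]
  · rw [Amat_apply_self, Amat_apply_self]
  · rw [Amat_apply_eq_zero_of_lt _ (Fin.castSucc_lt_castSucc_iff.2 h),
      Amat_apply_eq_zero_of_lt _ (Fin.succ_lt_succ_iff.2 h)]

theorem Bprod_mul_Amat_mul_Bprod_transpose :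
    Bprod G * Amat G * (Bprod G)ᵀ = Amat (Gshift G) := by
  ext j k
  induction j using Fin.lastCases with
  | cast i =>
    induction k using Fin.lastCases with
    | cast k =>
      rw [mul_Bprod_transpose_apply_castSucc, Bprod_mul_apply_castSucc, Bprod_mul_apply_castSucc,
        Amat_apply_self, Amat_apply_eq_zero_of_lt _ i.succ_pos, Amat_apply_of_lt _ k.succ_pos,
        Amat_Gshift_castSucc_castSucc]
      ring
    | last =>
      rw [mul_Bprod_transpose_apply_last, Bprod_mul_apply_castSucc, Amat_apply_self,
        Amat_apply_eq_zero_of_lt _ i.succ_pos, Amat_apply_of_lt _ (Fin.castSucc_lt_last i),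
        Gshift_castSucc_last, mul_one, sub_zero]
  | last =>
    induction k using Fin.lastCases with
    | cast k =>
      rw [mul_Bprod_transpose_apply_castSucc, Bprod_mul_apply_last, Bprod_mul_apply_last,
        Amat_apply_self, Amat_apply_of_lt _ k.succ_pos,
        Amat_apply_eq_zero_of_lt _ (Fin.castSucc_lt_last k), mul_one, sub_self]
    | last =>
      rw [mul_Bprod_transpose_apply_last, Bprod_mul_apply_last, Amat_apply_self, Amat_apply_self]

theorem symmOfUpper_Gshift {j k : Fin (m + 2)} (hjk : j ≠ k) :
    symmOfUpper (Gshift G) j k = symmOfUpper G (j + 1) (k + 1) := by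
  wlog hlt : j < k generalizing j k
  · rw [symmOfUpper_comm, this hjk.symm (lt_of_le_of_ne (not_lt.1 hlt) hjk.symm),
      symmOfUpper_comm]
  have hj : j < Fin.last (m + 1) := hlt.trans_le (Fin.le_last k)
  have hj' : (j : ℕ) < m + 1 := hj
  have hj1 : j + 1 = ⟨j + 1, by omega⟩ := Fin.ext (Fin.val_add_one_of_lt hj)
  rw [symmOfUpper_of_le _ hlt.le, hj1]
  rcases (Fin.le_last k).lt_or_eq with hk | rfl
  · have hk' : (k : ℕ) < m + 1 := hk
    have hk1 : k + 1 = ⟨k + 1, by omega⟩ := Fin.ext (Fin.val_add_one_of_lt hk)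
    rw [hk1, symmOfUpper_of_le _ (Fin.mk_le_mk.2 (Nat.succ_le_succ hlt.le))]
    simp only [Gshift, dif_pos hj', dif_pos hk']
  · rw [Fin.last_add_one, symmOfUpper_comm, symmOfUpper_of_le _ (Fin.zero_le _)]
    simp [Gshift, hj']

open Fin.NatCast in
theorem symmOfUpper_Gshift_iterate (t : ℕ) {j k : Fin (m + 2)} (hjk : j ≠ k) :
    symmOfUpper (Gshift^[t] G) j k = symmOfUpper G (j + t) (k + t) := by
  induction t generalizing G with
  | zero => simp
  | succ t ih =>
    rw [Function.iterate_succ_apply, ih, symmOfUpper_Gshift _ ((add_left_injective _).ne hjk)]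
    simp only [Nat.cast_succ, add_assoc]

theorem Gshift_iterate_period {j k : Fin (m + 2)} (hjk : j < k) :
    (Gshift^[m + 2] G) j k = G j k := by
  rw [← symmOfUpper_of_le (Gshift^[m + 2] G) hjk.le, symmOfUpper_Gshift_iterate _ _ hjk.ne,
    Fin.natCast_self, add_zero, add_zero, symmOfUpper_of_le _ hjk.le]

end Gshift

theorem BAB_cyclic {R : Type*} [CommRing R] {m : ℕ}
    (G : Fin (m + 2) → Fin (m + 2) → R) :
    Bprod G * Amat G * (Bprod G)ᵀ = Amat (Gshift G) ∧
      (∀ j k : Fin (m + 2), (j : ℕ) < (k : ℕ) →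
        (Gshift^[m + 2] G) j k = G j k) :=
  ⟨Bprod_mul_Amat_mul_Bprod_transpose G, fun _ _ h => Gshift_iterate_period G h⟩
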